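/- Let p, r, s, k be pairwise relevant positive integers with p, r, s pairwise coprime and r + s = p·k. For μ ≥ 1 an integer and a = (a_1,…,a_p) ∈ ℤ_{≥0}^p, write A = ⌊μr/p⌋, ρ = μr − pA, δ = 1 if ρ = 0 and δ = 0 otherwise, and S = a_1 + ⋯ + a_p. Define the A-model coefficient c_A(μ,a) as follows: if there exists l ∈ ℤ_{≥0} with Σ_{m=1}^{p−1} m·a_{m+1} = p·l + ρ, set c_A(μ,a) = (1/μ)·[∏_{j=1}^{μk−1}(j−μk)]/(A!·⌊μs/p⌋!) · [∏_{m=1}^{a_1+l}(A − a_1 − l + m)]/[∏_{m=0}^{a_1−1}(a_1 − m − μk)] · [∏_{m=1}^{S−l−1+δ}(μk − A + l − S + m)]/(a_1!⋯a_p!) (and c_A(μ,a) = 0 if no such l exists, noting l is unique when it exists). Define the B-model coefficient c_B(μ,a) as follows: if there exists b ∈ ℤ_{≥0} with b ≥ a_1 and p·b + Σ_{m=1}^{p−1} m·a_{m+1} = r·μ, set c_B(μ,a) = (−1)^{kμ−a_1−1}·[∏_{j=1}^{(Σ_{m=2}^{p} a_m)+b−1}(μk − a_1 − j)]/(a_1!⋯a_p!·(b−a_1)!·μ)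 (and c_B(μ,a) = 0 otherwise; b is unique when it exists). Then c_A(μ,a) = c_B(μ,a) for all μ ≥ 1 and all a ∈ ℤ_{≥0}^p; equivalently, the formal power series Σ_{μ≥1} Σ_a c_A(μ,a)·q_1^{a_1}⋯q_p^{a_p}·X^μ and Σ_{μ≥1} Σ_a c_B(μ,a)·q_1^{a_1}⋯q_p^{a_p}·X^μ in ℚ[[q_1,…,q_p,X]] coincide. -/

import Mathlib

/-!
Up to sign, every product occurring in the two formulas is a descending factorial
`N.descFactorial K`. Put `b = A - l`: the conditions that define `c_A` and `c_B` then agree,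
except when `a₁ + l > A`. In that case `c_B = 0`, and `c_A` contains the vanishing factor
`A.descFactorial (a₁ + l)`. Otherwise the identity reduces to
`X! * Y.descFactorial Y' = Y! * X.descFactorial X'` for `X - X' = Y - Y'`: both sides are
`X! Y! / (X - X')!`, or both are `0`.
-/

open Finset Nat

theorem prod_Icc_one_eq_prod_range {M : Type*} [CommMonoid M] (f : ℕ → M) (K : ℕ) :
    ∏ j ∈ Icc 1 K, f j = ∏ j ∈ range K, f (j + 1) := by
  rw [← Ico_add_one_right_eq_Icc, prod_Ico_eq_prod_range, add_tsub_cancel_right]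
  simp_rw [add_comm 1]

section DescendingProducts

variable {R : Type*} [CommRing R]

theorem prod_range_natCast_sub_eq_descFactorial (N K : ℕ) :
    ∏ j ∈ range K, ((N : R) - j) = N.descFactorial K := by
  rw [prod_range_natCast_sub, descFactorial_eq_prod_range]

theorem prod_Icc_sub_eq_descFactorial {x : R} {N : ℕ} (hx : x = N + 1) (K : ℕ) :
    ∏ j ∈ Icc 1 K, (x - j) = N.descFactorial K := by
  rw [prod_Icc_one_eq_prod_range, ← prod_range_natCast_sub_eq_descFactorial]
  refine prod_congr rfl fun j _ => ?_
  rw [hx]; push_cast; ring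

theorem prod_Icc_add_eq_descFactorial {x : R} {N K : ℕ} (hx : x + K = N) :
    ∏ m ∈ Icc 1 K, (x + m) = N.descFactorial K := by
  rw [prod_Icc_one_eq_prod_range, ← prod_range_natCast_sub_eq_descFactorial, ← prod_range_reflect]
  refine prod_congr rfl fun j hj => ?_
  rw [mem_range] at hj
  rw [← hx, show K - 1 - j + 1 = K - j by omega, Nat.cast_sub hj.le]
  ring

theorem prod_Icc_natCast_sub_eq_factorial (N : ℕ) {x : R} (hx : x = N + 1) :
    ∏ j ∈ Icc 1 N, ((j : R) - x) = (-1) ^ N * (N ! : R) := by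
  simp_rw [← neg_sub x, prod_neg, card_Icc, Nat.add_sub_cancel, prod_Icc_sub_eq_descFactorial hx,
    descFactorial_self]

theorem prod_range_sub_sub_eq_descFactorial (N K : ℕ) {x : R} (hx : x = N + 1) :
    ∏ m ∈ range K, ((K : R) - m - x) = (-1) ^ K * (N.descFactorial K : R) := by
  have hterm : ∀ j ∈ range K, (K : R) - ↑(K - 1 - j) - x = -((N : R) - j) := by
    intro j hj
    rw [mem_range] at hj
    rw [hx, Nat.cast_sub (by omega), Nat.cast_sub (by omega)]
    push_cast; ring
  rw [← prod_range_reflect, prod_congr rfl hterm, prod_neg, card_range,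
    prod_range_natCast_sub_eq_descFactorial]

end DescendingProducts

theorem div_add_div_add_one_of_add_eq_mul {p x y n : ℕ} (hp : 0 < p) (h : x + y = p * n) :
    y / p + x / p + 1 = n + if x % p = 0 then 1 else 0 := by
  have hsum := Nat.add_div (a := x) (b := y) hp
  rw [h, Nat.mul_div_cancel_left n hp] at hsum
  have hmod : (x % p + y % p) % p = 0 := by rw [← Nat.add_mod, h, Nat.mul_mod_right]
  have hx := Nat.mod_lt x hp
  have hy := Nat.mod_lt y hp
  by_cases hx0 : x % p = 0
  · rw [hx0, zero_add, Nat.mod_mod] at hmod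
    rw [if_neg (by omega)] at hsum
    rw [if_pos hx0]; omega
  · have : x % p + y % p = p := by
      obtain ⟨c, hc⟩ := Nat.dvd_of_mod_eq_zero hmod
      rcases c with _ | _ | c <;> [omega; omega; nlinarith]
    rw [if_pos (by omega)] at hsum
    rw [if_neg hx0]; omega

theorem succ_le_add_ite_of_mul_add_le {p l ρ T : ℕ} (hp : 0 < p) (h : p * l + ρ ≤ (p - 1) * T) :
    l + 1 ≤ T + if ρ = 0 then 1 else 0 := by
  rcases Nat.eq_zero_or_pos T with rfl | hT
  · obtain ⟨hpl | rfl, rfl⟩ : (p = 0 ∨ l = 0) ∧ ρ = 0 := by simpa using h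
    · omega
    · simp
  · have hl : l < T := by
      refine Nat.lt_of_mul_lt_mul_left (a := p) (lt_of_le_of_lt (le_trans (Nat.le_add_right _ ρ) h) ?_)
      exact Nat.mul_lt_mul_of_pos_right (by omega) hT
    split_ifs <;> omega

theorem one_le_add_of_mul_add_eq_pos {p b m T n : ℕ} (hm : m ≤ (p - 1) * T)
    (hb : p * b + m = n) (hn : 0 < n) : 1 ≤ T + b := by
  by_contra! h
  rw [show T = 0 by omega, mul_zero, Nat.le_zero] at hm
  rw [show b = 0 by omega, hm, mul_zero] at hb
  omega

theorem mul_div_lt_mul_of_add_eq_mul {p r s k μ : ℕ} (hp : 0 < p) (hs : 0 < s) (hμ : 0 < μ)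
    (hrs : r + s = p * k) : μ * r / p < μ * k := by
  rw [Nat.div_lt_iff_lt_mul hp]
  calc μ * r < μ * (r + s) := Nat.mul_lt_mul_of_pos_left (by omega) hμ
    _ = μ * k * p := by rw [hrs]; ring

theorem sum_Icc_one_eq_add_sum_Icc_two (a : ℕ → ℕ) {p : ℕ} (hp : 0 < p) :
    ∑ i ∈ Icc 1 p, a i = a 1 + ∑ i ∈ Icc 2 p, a i := by
  rw [← add_sum_Ioc_eq_sum_Icc hp]; rfl

theorem sum_Icc_mul_succ_le (a : ℕ → ℕ) {p : ℕ} (hp : 0 < p) :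
    ∑ m ∈ Icc 1 (p - 1), m * a (m + 1) ≤ (p - 1) * ∑ i ∈ Icc 2 p, a i := by
  calc ∑ m ∈ Icc 1 (p - 1), m * a (m + 1) ≤ ∑ m ∈ Icc 1 (p - 1), (p - 1) * a (m + 1) :=
        sum_le_sum fun m hm => Nat.mul_le_mul_right _ (mem_Icc.1 hm).2
    _ = (p - 1) * ∑ i ∈ Icc 2 p, a i := by
        obtain ⟨q, rfl⟩ : ∃ q, p = q + 1 := ⟨p - 1, by omega⟩
        rw [Nat.add_sub_cancel, ← mul_sum, show (2 : ℕ) = 1 + 1 from rfl, ← map_add_right_Icc,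
          sum_map]
        rfl

theorem factorial_mul_descFactorial_eq_of_add_eq {X Y X' Y' : ℕ} (h : X + Y' = Y + X') :
    X ! * Y.descFactorial Y' = Y ! * X.descFactorial X' := by
  rcases le_or_gt X' X with hX | hX
  · have hY : Y' ≤ Y := by omega
    apply Nat.eq_of_mul_eq_mul_left (factorial_pos (X - X'))
    calc (X - X')! * (X ! * Y.descFactorial Y')
        = X ! * ((Y - Y')! * Y.descFactorial Y') := by rw [show X - X' = Y - Y' by omega]; ring
      _ = (X - X')! * (Y ! * X.descFactorial X') := by
        rw [factorial_mul_descFactorial hY, ← factorial_mul_descFactorial hX]; ring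
  · rw [descFactorial_of_lt hX, descFactorial_of_lt (by omega), mul_zero, mul_zero]

theorem mul_add_eq_mul_add_iff {p b m A ρ : ℕ} (hρ : ρ < p) :
    p * b + m = p * A + ρ ↔ b ≤ A ∧ m = p * (A - b) + ρ := by
  constructor
  · intro h
    have hbA : b ≤ A := by
      by_contra! hAb
      have : p * (A + 1) ≤ p * b := Nat.mul_le_mul_left p hAb
      rw [mul_add] at this; omega
    refine ⟨hbA, ?_⟩
    rw [Nat.mul_sub]; have := Nat.mul_le_mul_left p hbA; omega
  · rintro ⟨hbA, rfl⟩
    rw [← add_assoc, ← mul_add, Nat.add_sub_cancel' hbA]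

theorem cA_formula_eq_cB_formula {μ k A B α l S T b δ : ℕ} {F : ℚ} (hF : F ≠ 0) (hμ : μ ≠ 0)
    (hB : B + A + 1 = μ * k + δ) (hS : S = α + T) (hA : A = b + l) (hαb : α ≤ b)
    (hAk : A < μ * k) (hlS : l + 1 ≤ S + δ) (hTb : 1 ≤ T + b) :
    (1 / (μ : ℚ)) * (∏ j ∈ Icc 1 (μ * k - 1), ((j : ℚ) - (μ : ℚ) * k)) / ((A ! : ℚ) * (B ! : ℚ))
        * ((∏ m ∈ Icc 1 (α + l), ((A : ℚ) - α - l + m))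
          / (∏ m ∈ range α, ((α : ℚ) - m - (μ : ℚ) * k)))
        * ((∏ m ∈ Icc 1 ((S : ℤ) - l - 1 + δ).toNat, ((μ : ℚ) * k - A + l - S + m)) / F)
      = (-1 : ℚ) ^ ((k : ℤ) * μ - α - 1) * (∏ j ∈ Icc 1 (T + b - 1), ((μ : ℚ) * k - α - j))
        / (F * ((b - α) ! : ℚ) * μ) := by
  obtain ⟨N, hN⟩ : ∃ N, μ * k = N + 1 := ⟨μ * k - 1, by omega⟩
  have hμk : (μ : ℚ) * k = N + 1 := by exact_mod_cast hN
  have hαN : α ≤ N := by omega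
  have hexp : (k : ℤ) * μ - α - 1 = ((N - α : ℕ) : ℤ) := by
    have : (k : ℤ) * μ = N + 1 := by rw [mul_comm]; exact_mod_cast hN
    push_cast [hαN]; linarith
  rw [show ((S : ℤ) - l - 1 + δ).toNat = S + δ - l - 1 by omega, hN, Nat.add_sub_cancel,
    prod_Icc_natCast_sub_eq_factorial N hμk, prod_range_sub_sub_eq_descFactorial N α hμk,
    prod_Icc_add_eq_descFactorial (N := A) (by push_cast; ring),
    prod_Icc_add_eq_descFactorial (N := B) (by
      have : (B : ℚ) + A + 1 = N + 1 + δ := by exact_mod_cast hN ▸ hB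
      rw [Nat.sub_sub, Nat.cast_sub hlS, hμk, hS]; push_cast; linarith),
    prod_Icc_sub_eq_descFactorial (N := N - α) (by rw [Nat.cast_sub hαN, hμk]; ring),
    hexp, zpow_natCast]
  have hN_fact : ((N - α) ! : ℚ) * N.descFactorial α = N ! := by
    exact_mod_cast factorial_mul_descFactorial hαN
  have hA_fact : ((b - α) ! : ℚ) * A.descFactorial (α + l) = A ! := by
    rw [show b - α = A - (α + l) by omega]; exact_mod_cast factorial_mul_descFactorial (by omega)
  have hkey : ((N - α) ! : ℚ) * B.descFactorial (S + δ - l - 1)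
      = B ! * (N - α).descFactorial (T + b - 1) := by
    exact_mod_cast factorial_mul_descFactorial_eq_of_add_eq (by omega)
  have hsign : (-1 : ℚ) ^ N = (-1) ^ (N - α) * (-1) ^ α := by rw [← pow_add, Nat.sub_add_cancel hαN]
  have hN_desc : (N.descFactorial α : ℚ) ≠ 0 := by
    exact_mod_cast (Nat.descFactorial_eq_zero_iff_lt.not.2 (by omega))
  have hA_desc : (A.descFactorial (α + l) : ℚ) ≠ 0 := by
    exact_mod_cast (Nat.descFactorial_eq_zero_iff_lt.not.2 (by omega))
  rw [← hN_fact, ← hA_fact, hsign]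
  field_simp
  linear_combination hkey

theorem disk_mirror_theorem_coefficients_general (p r s k : ℕ)
    (hp : 0 < p) (hr : 0 < r) (hs : 0 < s)
    (hrs : r + s = p * k)
    (cA cB : ℕ → (ℕ → ℕ) → ℚ)
    (hcA1 : ∀ (μ : ℕ) (a : ℕ → ℕ) (A ρ δ S l : ℕ),
      A = μ * r / p → ρ = μ * r - p * A → δ = (if ρ = 0 then 1 else 0) →
      S = ∑ i ∈ Finset.Icc 1 p, a i →
      (∑ m ∈ Finset.Icc 1 (p - 1), m * a (m + 1)) = p * l + ρ →
      cA μ a = (1 / (μ : ℚ)) * (∏ j ∈ Finset.Icc 1 (μ * k - 1), ((j : ℚ) - (μ : ℚ) * k))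
        / ((Nat.factorial A : ℚ) * (Nat.factorial (μ * s / p) : ℚ))
        * ((∏ m ∈ Finset.Icc 1 (a 1 + l), ((A : ℚ) - (a 1 : ℚ) - (l : ℚ) + (m : ℚ)))
          / (∏ m ∈ Finset.range (a 1), ((a 1 : ℚ) - (m : ℚ) - (μ : ℚ) * k)))
        * ((∏ m ∈ Finset.Icc 1 (((S : ℤ) - (l : ℤ) - 1 + (δ : ℤ)).toNat),
            ((μ : ℚ) * k - (A : ℚ) + (l : ℚ) - (S : ℚ) + (m : ℚ)))
          / (∏ i ∈ Finset.Icc 1 p, (Nat.factorial (a i) : ℚ))))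
    (hcA0 : ∀ (μ : ℕ) (a : ℕ → ℕ),
      (¬ ∃ l : ℕ, (∑ m ∈ Finset.Icc 1 (p - 1), m * a (m + 1))
          = p * l + (μ * r - p * (μ * r / p))) →
      cA μ a = 0)
    (hcB1 : ∀ (μ : ℕ) (a : ℕ → ℕ) (b : ℕ),
      a 1 ≤ b → p * b + (∑ m ∈ Finset.Icc 1 (p - 1), m * a (m + 1)) = r * μ →
      cB μ a = (-1 : ℚ) ^ ((k : ℤ) * (μ : ℤ) - (a 1 : ℤ) - 1)
        * (∏ j ∈ Finset.Icc 1 ((∑ m ∈ Finset.Icc 2 p, a m) + b - 1),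
            ((μ : ℚ) * k - (a 1 : ℚ) - (j : ℚ)))
        / ((∏ i ∈ Finset.Icc 1 p, (Nat.factorial (a i) : ℚ))
          * (Nat.factorial (b - a 1) : ℚ) * (μ : ℚ)))
    (hcB0 : ∀ (μ : ℕ) (a : ℕ → ℕ),
      (¬ ∃ b : ℕ, a 1 ≤ b ∧
        p * b + (∑ m ∈ Finset.Icc 1 (p - 1), m * a (m + 1)) = r * μ) →
      cB μ a = 0) :
    ∀ (μ : ℕ), 1 ≤ μ → ∀ a : ℕ → ℕ, cA μ a = cB μ a := by
  intro μ hμ a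
  set A := μ * r / p
  set ρ := μ * r - p * A
  set Sig := ∑ m ∈ Icc 1 (p - 1), m * a (m + 1)
  set T := ∑ i ∈ Icc 2 p, a i
  have hSigT : Sig ≤ (p - 1) * T := sum_Icc_mul_succ_le a hp
  have hρ : ρ = μ * r % p := Nat.mod_eq_sub_mul_div.symm
  have hrμ : r * μ = p * A + ρ := by rw [hρ, mul_comm r, Nat.div_add_mod]
  have hρp : ρ < p := hρ ▸ Nat.mod_lt _ hp
  by_cases hl : ∃ l, Sig = p * l + ρ
  · obtain ⟨l, hl⟩ := hl
    rw [hcA1 μ a A ρ _ _ l rfl rfl rfl rfl hl]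
    by_cases hαl : a 1 + l ≤ A
    · have hb : p * (A - l) + Sig = r * μ := by
        rw [hrμ, mul_add_eq_mul_add_iff hρp, Nat.sub_sub_self (by omega)]
        exact ⟨Nat.sub_le A l, hl⟩
      rw [hcB1 μ a (A - l) (by omega) hb]
      refine cA_formula_eq_cB_formula (prod_ne_zero_iff.2 fun i _ => by positivity) (by omega)
        ?_ (sum_Icc_one_eq_add_sum_Icc_two a hp) (by omega) (by omega) ?_ ?_ ?_
      · rw [hρ]
        exact div_add_div_add_one_of_add_eq_mul hp (by rw [← mul_add, hrs]; ring)
      · exact mul_div_lt_mul_of_add_eq_mul hp hs hμ hrs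
      · have := succ_le_add_ite_of_mul_add_le hp (hl ▸ hSigT)
        rw [sum_Icc_one_eq_add_sum_Icc_two a hp]; omega
      · exact one_le_add_of_mul_add_eq_pos hSigT hb (Nat.mul_pos hr hμ)
    · rw [hcB0 μ a ?_, prod_Icc_add_eq_descFactorial (N := A) (by push_cast; ring),
        descFactorial_of_lt (by omega)]
      · simp
      · rintro ⟨b, hαb, hb⟩
        obtain ⟨hbA, hSig⟩ := (mul_add_eq_mul_add_iff hρp).1 (hrμ ▸ hb)
        have := Nat.eq_of_mul_eq_mul_left hp (by omega : p * (A - b) = p * l)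
        omega
  · rw [hcA0 μ a hl, hcB0 μ a ?_]
    rintro ⟨b, -, hb⟩
    exact hl ⟨A - b, ((mul_add_eq_mul_add_iff hρp).1 (hrμ ▸ hb)).2⟩

/-- Disk mirror theorem for `L_{r,s}` in the orbifold resolved conifold,
as an identity of power-series coefficients: with `p, r, s` pairwise coprime,
`r + s = p·k`, the A-model disk-potential coefficient `c_A(μ,a)` (coming from the
equivariant I-function, the closed mirror map and the disk factor `D'(μ)`) equals
the B-model coefficient `c_B(μ,a)` (coming from `-r` times the part of `W_{0,1}(η,q)`
with `η`-degree divisible by `r`, written in `X = η^r`), for all `μ ≥ 1` and all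
`a = (a₁,…,a_p) ∈ ℤ_{≥0}^p`.  Here `c_A` and `c_B` are characterized by:
if `Σ_{m=1}^{p-1} m·a_{m+1} = p·l + ρ` (with `A = ⌊μr/p⌋`, `ρ = μr - pA`,
`δ = 1` iff `ρ = 0`, `S = a₁+⋯+a_p`) then
`c_A(μ,a) = (1/μ)·[∏_{j=1}^{μk-1}(j-μk)]/(A!·⌊μs/p⌋!)
  ·[∏_{m=1}^{a₁+l}(A-a₁-l+m)]/[∏_{m=0}^{a₁-1}(a₁-m-μk)]
  ·[∏_{m=1}^{S-l-1+δ}(μk-A+l-S+m)]/(a₁!⋯a_p!)`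
and `c_A(μ,a) = 0` if no such `l` exists; if `b ≥ a₁` and
`p·b + Σ_{m=1}^{p-1} m·a_{m+1} = r·μ` then
`c_B(μ,a) = (-1)^{kμ-a₁-1}·[∏_{j=1}^{(Σ_{m=2}^p a_m)+b-1}(μk-a₁-j)]/(a₁!⋯a_p!·(b-a₁)!·μ)`
and `c_B(μ,a) = 0` if no such `b` exists (empty products equal 1). -/
theorem disk_mirror_theorem_coefficients (p r s k : ℕ)
    (hp : 0 < p) (hr : 0 < r) (hs : 0 < s) (hk : 0 < k)
    (hrs : r + s = p * k)
    (h_rs : Nat.Coprime r s) (h_pr : Nat.Coprime p r) (h_ps : Nat.Coprime p s)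
    (cA cB : ℕ → (ℕ → ℕ) → ℚ)
    (hcA1 : ∀ (μ : ℕ) (a : ℕ → ℕ) (A ρ δ S l : ℕ),
      A = μ * r / p → ρ = μ * r - p * A → δ = (if ρ = 0 then 1 else 0) →
      S = ∑ i ∈ Finset.Icc 1 p, a i →
      (∑ m ∈ Finset.Icc 1 (p - 1), m * a (m + 1)) = p * l + ρ →
      cA μ a = (1 / (μ : ℚ)) * (∏ j ∈ Finset.Icc 1 (μ * k - 1), ((j : ℚ) - (μ : ℚ) * k))
        / ((Nat.factorial A : ℚ) * (Nat.factorial (μ * s / p) : ℚ))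
        * ((∏ m ∈ Finset.Icc 1 (a 1 + l), ((A : ℚ) - (a 1 : ℚ) - (l : ℚ) + (m : ℚ)))
          / (∏ m ∈ Finset.range (a 1), ((a 1 : ℚ) - (m : ℚ) - (μ : ℚ) * k)))
        * ((∏ m ∈ Finset.Icc 1 (((S : ℤ) - (l : ℤ) - 1 + (δ : ℤ)).toNat),
            ((μ : ℚ) * k - (A : ℚ) + (l : ℚ) - (S : ℚ) + (m : ℚ)))
          / (∏ i ∈ Finset.Icc 1 p, (Nat.factorial (a i) : ℚ))))
    (hcA0 : ∀ (μ : ℕ) (a : ℕ → ℕ),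
      (¬ ∃ l : ℕ, (∑ m ∈ Finset.Icc 1 (p - 1), m * a (m + 1))
          = p * l + (μ * r - p * (μ * r / p))) →
      cA μ a = 0)
    (hcB1 : ∀ (μ : ℕ) (a : ℕ → ℕ) (b : ℕ),
      a 1 ≤ b → p * b + (∑ m ∈ Finset.Icc 1 (p - 1), m * a (m + 1)) = r * μ →
      cB μ a = (-1 : ℚ) ^ ((k : ℤ) * (μ : ℤ) - (a 1 : ℤ) - 1)
        * (∏ j ∈ Finset.Icc 1 ((∑ m ∈ Finset.Icc 2 p, a m) + b - 1),
            ((μ : ℚ) * k - (a 1 : ℚ) - (j : ℚ)))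
        / ((∏ i ∈ Finset.Icc 1 p, (Nat.factorial (a i) : ℚ))
          * (Nat.factorial (b - a 1) : ℚ) * (μ : ℚ)))
    (hcB0 : ∀ (μ : ℕ) (a : ℕ → ℕ),
      (¬ ∃ b : ℕ, a 1 ≤ b ∧
        p * b + (∑ m ∈ Finset.Icc 1 (p - 1), m * a (m + 1)) = r * μ) →
      cB μ a = 0) :
    ∀ (μ : ℕ), 1 ≤ μ → ∀ a : ℕ → ℕ, cA μ a = cB μ a :=
  disk_mirror_theorem_coefficients_general p r s k hp hr hs hrs cA cB hcA1 hcA0 hcB1 hcB0
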